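/- A signed star K_{1,p} with exactly one negative edge and p − 1 positive edges admits an additively graceful labeling. -/

import Mathlib

open Finset

/-- Edge label for a negative (or ordinary) edge: sum of endpoint labels. -/
def negLabel (f : ℕ → ℕ) : Sym2 ℕ → ℕ :=
  Sym2.lift ⟨fun a b => f a + f b, fun a b => Nat.add_comm _ _⟩

/-- Edge label for a positive edge: absolute difference of endpoint labels. -/
def posLabel (f : ℕ → ℕ) : Sym2 ℕ → ℕ :=
  Sym2.lift ⟨fun a b => max (f a) (f b) - min (f a) (f b),
    fun a b => by simp only []; rw [max_comm, min_comm]⟩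

/-- A (p,q)-graph with vertex finset `Vs` and edge finset `E` is additively graceful:
there is an injective `f : Vs → {0,…,⌈(q+1)/2⌉}` whose induced edge sums are
distinct and exactly `{1,…,q}`.  (Note `⌈(q+1)/2⌉ = (q+2)/2` in `ℕ`.) -/
def IsAddGracefulGraph (Vs : Finset ℕ) (E : Finset (Sym2 ℕ)) : Prop :=
  ∃ f : ℕ → ℕ, Set.InjOn f ↑Vs ∧ (∀ v ∈ Vs, f v ≤ (E.card + 2) / 2) ∧
    Set.InjOn (negLabel f) ↑E ∧ E.image (negLabel f) = Finset.Icc 1 E.card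

/-- A signed graph with vertex finset `Vs`, positive edges `P` (m := P.card) and
negative edges `N` (n := N.card) is additively graceful: there is an injective
`f : Vs → {0,…,m + ⌈(n+1)/2⌉}` with positive-edge labels `|f u - f v|` exactly
`{1,…,m}` and negative-edge labels `f u + f v` exactly `{1,…,n}`. -/
def IsAddGracefulSigned (Vs : Finset ℕ) (P N : Finset (Sym2 ℕ)) : Prop :=
  ∃ f : ℕ → ℕ, Set.InjOn f ↑Vs ∧
    (∀ v ∈ Vs, f v ≤ P.card + (N.card + 2) / 2) ∧
    Set.InjOn (posLabel f) ↑P ∧ P.image (posLabel f) = Finset.Icc 1 P.card ∧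
    Set.InjOn (negLabel f) ↑N ∧ N.image (negLabel f) = Finset.Icc 1 N.card

/-! Label the centre `0` by `1`, the end `1` of the negative edge by `0` and every other pendant
by itself: this is the transposition `(0 1)`. The negative edge gets `0 + 1 = 1` and the
positive edge `s(0, i)` gets `i - 1`, which runs through `1, …, p - 1` once each. -/

lemma card_image_mk_left {α : Type*} [DecidableEq α] (a : α) (s : Finset α) :
    (s.image fun b => s(a, b)).card = s.card :=
  card_image_of_injective _ fun _ _ => Sym2.congr_right.mp

lemma posLabel_mk_of_le {f : ℕ → ℕ} {a b : ℕ} (h : f a ≤ f b) :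
    posLabel f s(a, b) = f b - f a := by
  simp only [posLabel, Sym2.lift_mk, max_eq_right h, min_eq_left h]

lemma negLabel_mk (f : ℕ → ℕ) (a b : ℕ) : negLabel f s(a, b) = f a + f b := rfl

lemma injOn_of_image_eq_Icc {α : Type*} [DecidableEq α] {s : Finset α} {g : α → ℕ}
    (h : s.image g = Icc 1 s.card) : Set.InjOn g s :=
  injOn_of_card_image_eq (by rw [h, Nat.card_Icc, Nat.add_sub_cancel])

lemma isAddGracefulSigned_of_image_eq {Vs : Finset ℕ} {P N : Finset (Sym2 ℕ)} (f : ℕ → ℕ)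
    (hf : Set.InjOn f Vs) (hle : ∀ v ∈ Vs, f v ≤ P.card + (N.card + 2) / 2)
    (hP : P.image (posLabel f) = Icc 1 P.card) (hN : N.image (negLabel f) = Icc 1 N.card) :
    IsAddGracefulSigned Vs P N :=
  ⟨f, hf, hle, injOn_of_image_eq_Icc hP, hP, injOn_of_image_eq_Icc hN, hN⟩

lemma posLabel_swap_zero_one {i : ℕ} (hi : 2 ≤ i) :
    posLabel (Equiv.swap 0 1) s(0, i) = i - 1 := by
  have hfix : Equiv.swap 0 1 i = i := Equiv.swap_apply_of_ne_of_ne (by omega) (by omega)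
  rw [posLabel_mk_of_le] <;> rw [Equiv.swap_apply_left, hfix]
  omega

lemma image_posLabel_swap_zero_one (p : ℕ) :
    ((Icc 2 p).image fun i => s(0, i)).image (posLabel (Equiv.swap 0 1)) = Icc 1 (p - 1) :=
  calc _ = (Icc 2 p).image (· - 1) := by
        rw [image_image]
        exact image_congr fun i hi => posLabel_swap_zero_one (mem_Icc.mp hi).1
    _ = Icc 1 (p - 1) := by
        ext k
        simp only [mem_image, mem_Icc]
        exact ⟨by rintro ⟨i, hi, rfl⟩; omega, fun hk => ⟨k + 1, by omega, by omega⟩⟩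

lemma swap_zero_one_le_of_lt {p v : ℕ} (hv : v < p + 1) : Equiv.swap 0 1 v ≤ p - 1 + 1 := by
  rw [Equiv.swap_apply_def]
  split_ifs <;> omega

theorem stmt_4_general (p : ℕ) :
    IsAddGracefulSigned (Finset.range (p + 1))
      ((Finset.Icc 2 p).image fun i => s(0, i))
      {s(0, 1)} := by
  have hP : ((Icc 2 p).image fun i => s(0, i)).card = p - 1 := by
    rw [card_image_mk_left, Nat.card_Icc]
    omega
  refine isAddGracefulSigned_of_image_eq (Equiv.swap 0 1) (Equiv.injective _).injOn ?_ ?_ ?_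
  · intro v hv
    rw [hP, card_singleton]
    exact swap_zero_one_le_of_lt (mem_range.mp hv)
  · rw [hP, image_posLabel_swap_zero_one]
  · rw [image_singleton, negLabel_mk, Equiv.swap_apply_left, Equiv.swap_apply_right]
    rfl

/-- A signed star `K_{1,p}` (center 0, pendants 1,…,p) with exactly one negative
edge `{0,1}` and `p-1` positive edges admits an additively graceful labeling. -/
theorem stmt_4 (p : ℕ) (hp : 1 ≤ p) :
    IsAddGracefulSigned (Finset.range (p + 1))
      ((Finset.Icc 2 p).image fun i => s(0, i))
      {s(0, 1)} :=
  stmt_4_general p
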